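/- (Lemma 7, first part) Let ρ₁ ∈ ℝ, ρ₂ = −(2/√5)ρ₁, ρ₃ = (2√3/√10)ρ₁, and f = ρ₁e₁ + ρ₂e₂ + ρ₃e₃ ∈ ℝ⁴. Then Γ(f,f) = 0, where Γ(f,f) = (B/3)(f₁f₂ − 2f₀f₃)·(√2, −1, −1, √2). -/

import Mathlib

open Finset

/-- The linearized collision operator of the one-dimensional Broadwell model with
collision frequency `B`, as a `4 × 4` matrix. -/
noncomputable def LBmat (B : ℝ) : Matrix (Fin 4) (Fin 4) ℝ :=
  (-(B / 3)) • !![-2, Real.sqrt 2, Real.sqrt 2, -2;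
                  Real.sqrt 2, -1, -1, Real.sqrt 2;
                  Real.sqrt 2, -1, -1, Real.sqrt 2;
                  -2, Real.sqrt 2, Real.sqrt 2, -2]

/-- `e₁ = (√2/2, 0, 0, −√2/2)`. -/
noncomputable def eB1 : EuclideanSpace ℝ (Fin 4) :=
  WithLp.toLp 2 ![Real.sqrt 2 / 2, 0, 0, -(Real.sqrt 2 / 2)]

/-- `e₂ = (1/√10, 2/√5, 0, 1/√10)`. -/
noncomputable def eB2 : EuclideanSpace ℝ (Fin 4) :=
  WithLp.toLp 2 ![1 / Real.sqrt 10, 2 / Real.sqrt 5, 0, 1 / Real.sqrt 10]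

/-- `e₃ = (1/√15, −1/√30, √5/√6, 1/√15)`. -/
noncomputable def eB3 : EuclideanSpace ℝ (Fin 4) :=
  WithLp.toLp 2 ![1 / Real.sqrt 15, -(1 / Real.sqrt 30), Real.sqrt 5 / Real.sqrt 6, 1 / Real.sqrt 15]

/-- The quadratic term of the one-dimensional Broadwell model:
`Γ(f,f) = (B/3)(f₁f₂ − 2f₀f₃)·(√2, −1, −1, √2)`. -/
noncomputable def GamB (B : ℝ) (f : Fin 4 → ℝ) : Fin 4 → ℝ :=
  (B / 3 * (f 1 * f 2 - 2 * f 0 * f 3)) •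
    ![Real.sqrt 2, -1, -1, Real.sqrt 2]

/-! With the prescribed `ρ₂, ρ₃`, the combination `ρ₁e₁ + ρ₂e₂ + ρ₃e₃` collapses to
`ρ₁ (√2/2, −1, 1, −√2/2)`. Since `Γ` is quadratic it suffices to check that this vector
satisfies `f₁f₂ = 2f₀f₃`, which is `−1 = −2 (√2/2)²`. -/

open Real

theorem GamB_smul (B c : ℝ) (f : Fin 4 → ℝ) : GamB B (c • f) = c ^ 2 • GamB B f := by
  simp only [GamB, Pi.smul_apply, smul_eq_mul, smul_smul]
  congr 1
  ring

theorem GamB_eq_zero_of_mul_eq (B : ℝ) {f : Fin 4 → ℝ} (h : f 1 * f 2 = 2 * f 0 * f 3) :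
    GamB B f = 0 := by
  rw [GamB, sub_eq_zero.mpr h, mul_zero, zero_smul]

theorem eB1_sub_smul_eB2_add_smul_eB3 :
    eB1.ofLp - (2 / √5) • eB2.ofLp + (2 * √3 / √10) • eB3.ofLp =
      ![√2 / 2, -1, 1, -(√2 / 2)] := by
  have h10 : √10 = √2 * √5 := by rw [← Real.sqrt_mul (by norm_num)]; norm_num
  have h6 : √6 = √2 * √3 := by rw [← Real.sqrt_mul (by norm_num)]; norm_num
  have h15 : √15 = √3 * √5 := by rw [← Real.sqrt_mul (by norm_num)]; norm_num
  have h30 : √30 = √3 * √10 := by rw [← Real.sqrt_mul (by norm_num)]; norm_num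
  have q2 : √2 ^ 2 = 2 := Real.sq_sqrt (by norm_num)
  have q5 : √5 ^ 2 = 5 := Real.sq_sqrt (by norm_num)
  ext i
  fin_cases i <;> simp [eB1, eB2, eB3, h10, h6, h15, h30] <;> field_simp <;> norm_num [q2, q5]

theorem GamB_broadwell_vector_eq_zero (B : ℝ) :
    GamB B ![√2 / 2, -1, 1, -(√2 / 2)] = 0 := by
  apply GamB_eq_zero_of_mul_eq
  have q2 : √2 ^ 2 = 2 := Real.sq_sqrt (by norm_num)
  simp only [Matrix.cons_val]
  linear_combination q2 / 2

theorem broadwell_Gam_eq_zero_general (B : ℝ) (ρ₁ ρ₂ ρ₃ : ℝ)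
    (h2 : ρ₂ = -(2 / Real.sqrt 5) * ρ₁) (h3 : ρ₃ = 2 * Real.sqrt 3 / Real.sqrt 10 * ρ₁)
    (f : Fin 4 → ℝ) (hf : f = ρ₁ • eB1 + ρ₂ • eB2 + ρ₃ • eB3) :
    GamB B f = 0 := by
  have hf_eq : f = ρ₁ • (eB1.ofLp - (2 / √5) • eB2.ofLp + (2 * √3 / √10) • eB3.ofLp) := by
    rw [hf, h2, h3]
    module
  rw [hf_eq, eB1_sub_smul_eB2_add_smul_eB3, GamB_smul, GamB_broadwell_vector_eq_zero, smul_zero]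

/-- Lemma 7, first part: with `ρ₂ = −(2/√5)ρ₁`, `ρ₃ = (2√3/√10)ρ₁`
and `f = ρ₁e₁ + ρ₂e₂ + ρ₃e₃`, one has `Γ(f,f) = 0`. -/
theorem broadwell_Gam_eq_zero (B : ℝ) (hB : 0 < B) (ρ₁ ρ₂ ρ₃ : ℝ)
    (h2 : ρ₂ = -(2 / Real.sqrt 5) * ρ₁) (h3 : ρ₃ = 2 * Real.sqrt 3 / Real.sqrt 10 * ρ₁)
    (f : Fin 4 → ℝ) (hf : f = ρ₁ • eB1 + ρ₂ • eB2 + ρ₃ • eB3) :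
    GamB B f = 0 :=
  broadwell_Gam_eq_zero_general B ρ₁ ρ₂ ρ₃ h2 h3 f hf
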